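/- Let s ∈ (0, 1/2] and R_CE ∈ [0,1], and let Q be a probability measure on [0,1] with ∫ v² dQ(v) ≤ R_CE. Then ∫ C_s((1−v)², (1+v)²) dQ(v) ≤ R_CE · C_s(0, 4), where C_s(λ0,λ1) = s·λ0 + (1−s)·λ1 − λ0^s λ1^{1−s}. Equality holds for the time-sharing measure Q* = R_CE·δ_1 + (1−R_CE)·δ_0. -/

import Mathlib

/-!
On `[0, 1]` the exponent is dominated by its chord in `v²`:
`C_s((1-v)², (1+v)²) ≤ 4(1-s) v² = v² C_s(0, 4)`, with equality at `v = 0` and `v = 1`.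
After expanding, the chord bound is `(1-v)(1 + (3-4s)v) ≤ (1-v)^(2s) (1+v)^(2-2s)`, i.e. weighted
AM-GM with exponent `2 - 2s ≥ 1`, which is where `s ≤ 1/2` enters. Integrating against `Q` and
using the second-moment budget gives the bound; the time-sharing measure charges only the two
points where the chord is tight.
-/

open MeasureTheory

/-- The Chernoff `s`-divergence between Poisson distributions with rates `l0` and `l1`
(real powers, with the convention `0^s = 0` for `s > 0`). -/
noncomputable def chernoffPoisson (s l0 l1 : ℝ) : ℝ :=
  s * l0 + (1 - s) * l1 - l0 ^ s * l1 ^ (1 - s)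

theorem mul_rpow_sub_one_le_weighted_mean_rpow {a b p : ℝ} (ha : 0 ≤ a) (hb : 0 ≤ b)
    (hp : 1 ≤ p) : a * b ^ (p - 1) ≤ ((a + (p - 1) * b) / p) ^ p := by
  have hp0 : p ≠ 0 := by positivity
  have hamgm := Real.geom_mean_le_arith_mean2_weighted (by positivity : 0 ≤ 1 / p)
    (div_nonneg (by linarith) (by linarith) : 0 ≤ (p - 1) / p) ha hb
    (by field_simp; ring)
  calc a * b ^ (p - 1) = (a ^ (1 / p) * b ^ ((p - 1) / p)) ^ p := by
        rw [Real.mul_rpow (by positivity) (by positivity), ← Real.rpow_mul ha,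
          ← Real.rpow_mul hb, one_div_mul_cancel hp0, div_mul_cancel₀ _ hp0, Real.rpow_one]
    _ ≤ (1 / p * a + (p - 1) / p * b) ^ p := by gcongr
    _ = ((a + (p - 1) * b) / p) ^ p := by ring_nf

theorem chernoffPoisson_nonneg {s l0 l1 : ℝ} (hs : s ∈ Set.Icc (0 : ℝ) 1) (hl0 : 0 ≤ l0)
    (hl1 : 0 ≤ l1) : 0 ≤ chernoffPoisson s l0 l1 := by
  have := Real.geom_mean_le_arith_mean2_weighted hs.1 (sub_nonneg.2 hs.2) hl0 hl1 (by ring)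
  rw [chernoffPoisson]
  linarith

theorem chernoffPoisson_self (s : ℝ) {l : ℝ} (hl : 0 ≤ l) : chernoffPoisson s l l = 0 := by
  rw [chernoffPoisson, ← Real.rpow_add' hl (by norm_num), add_sub_cancel, Real.rpow_one]
  ring

theorem chernoffPoisson_zero_left {s : ℝ} (hs : s ≠ 0) (l : ℝ) :
    chernoffPoisson s 0 l = (1 - s) * l := by
  rw [chernoffPoisson, Real.zero_rpow hs]
  ring

theorem chernoffPoisson_bpsk_le {s v : ℝ} (hs : s ≤ 1 / 2) (hv : v ∈ Set.Icc (0 : ℝ) 1) :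
    chernoffPoisson s ((1 - v) ^ 2) ((1 + v) ^ 2) ≤ 4 * (1 - s) * v ^ 2 := by
  obtain ⟨hv0, hv1⟩ := hv
  have hm : 0 ≤ 1 - v := by linarith
  have hp : 0 ≤ 1 + v := by linarith
  have hmean : (1 + (3 - 4 * s) * v + (2 - 2 * s - 1) * (1 - v)) / (2 - 2 * s) = 1 + v := by
    rw [div_eq_iff (by linarith)]
    ring
  have hamgm := mul_rpow_sub_one_le_weighted_mean_rpow (p := 2 - 2 * s)
    (by nlinarith : 0 ≤ 1 + (3 - 4 * s) * v) hm (by linarith)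
  rw [hmean, show 2 - 2 * s - 1 = 1 - 2 * s by ring] at hamgm
  have hpowers : ((1 - v) ^ 2) ^ s * ((1 + v) ^ 2) ^ (1 - s)
      = (1 - v) ^ (2 * s) * (1 + v) ^ (2 - 2 * s) := by
    rw [← Real.rpow_natCast_mul hm, ← Real.rpow_natCast_mul hp]
    ring_nf
  have hlower : (1 + (3 - 4 * s) * v) * (1 - v) ≤ (1 - v) ^ (2 * s) * (1 + v) ^ (2 - 2 * s) :=
    calc (1 + (3 - 4 * s) * v) * (1 - v)
        = (1 - v) ^ (2 * s) * ((1 + (3 - 4 * s) * v) * (1 - v) ^ (1 - 2 * s)) := by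
          rw [mul_left_comm, ← Real.rpow_add' hm (by norm_num), add_sub_cancel, Real.rpow_one]
      _ ≤ (1 - v) ^ (2 * s) * (1 + v) ^ (2 - 2 * s) := by gcongr
  rw [chernoffPoisson, hpowers]
  linarith

theorem integral_ofReal_smul_dirac_add {f : ℝ → ℝ} {a b x y : ℝ} (ha : 0 ≤ a) (hb : 0 ≤ b) :
    ∫ v, f v ∂(ENNReal.ofReal a • Measure.dirac x + ENNReal.ofReal b • Measure.dirac y)
      = a * f x + b * f y := by
  rw [integral_add_measure
      ((integrable_dirac enorm_lt_top).smul_measure ENNReal.ofReal_ne_top)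
      ((integrable_dirac enorm_lt_top).smul_measure ENNReal.ofReal_ne_top),
    integral_smul_measure, integral_smul_measure, integral_dirac, integral_dirac,
    ENNReal.toReal_ofReal ha, ENNReal.toReal_ofReal hb, smul_eq_mul, smul_eq_mul]

/-- For `s ∈ (0,1/2]` and a probability measure `Q` on `[0,1]` with second moment at
most `R_CE`, the expected dark-count-free BPSK Chernoff exponent is at most
`R_CE · C_s(0,4)`, with equality for the time-sharing measure
`Q* = R_CE·δ_1 + (1-R_CE)·δ_0`. -/
theorem time_sharing_exponent_optimal (s RCE : ℝ) (hs : s ∈ Set.Ioc (0 : ℝ) (1 / 2))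
    (hR : RCE ∈ Set.Icc (0 : ℝ) 1) (Q : Measure ℝ) [IsProbabilityMeasure Q]
    (hQsupp : Q (Set.Icc (0 : ℝ) 1)ᶜ = 0)
    (hQE : (∫ v, v ^ 2 ∂Q) ≤ RCE) :
    (∫ v, chernoffPoisson s ((1 - v) ^ 2) ((1 + v) ^ 2) ∂Q) ≤
        RCE * chernoffPoisson s 0 4 ∧
    (∫ v, chernoffPoisson s ((1 - v) ^ 2) ((1 + v) ^ 2)
        ∂(ENNReal.ofReal RCE • Measure.dirac (1 : ℝ) +
          ENNReal.ofReal (1 - RCE) • Measure.dirac (0 : ℝ)))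
      = RCE * chernoffPoisson s 0 4 := by
  obtain ⟨hs0, hs2⟩ := hs
  have hQ01 : ∀ᵐ v ∂Q, v ∈ Set.Icc (0 : ℝ) 1 := ae_iff.2 hQsupp
  have hC04 : chernoffPoisson s 0 4 = 4 * (1 - s) := by
    rw [chernoffPoisson_zero_left hs0.ne']
    ring
  refine ⟨?_, ?_⟩
  · have hsq : Integrable (fun v : ℝ ↦ v ^ 2) Q :=
      .of_bound (by fun_prop) 1 <| hQ01.mono fun v hv ↦ by
        rw [Real.norm_eq_abs, abs_of_nonneg (sq_nonneg v)]
        exact pow_le_one₀ hv.1 hv.2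
    calc (∫ v, chernoffPoisson s ((1 - v) ^ 2) ((1 + v) ^ 2) ∂Q)
        ≤ ∫ v, 4 * (1 - s) * v ^ 2 ∂Q :=
          integral_mono_of_nonneg
            (.of_forall fun v ↦ chernoffPoisson_nonneg ⟨hs0.le, by linarith⟩
              (sq_nonneg _) (sq_nonneg _))
            (hsq.const_mul _) (hQ01.mono fun v hv ↦ chernoffPoisson_bpsk_le hs2 hv)
      _ = 4 * (1 - s) * ∫ v, v ^ 2 ∂Q := integral_const_mul _ _
      _ ≤ RCE * chernoffPoisson s 0 4 := by
          rw [hC04, mul_comm]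
          gcongr
          linarith
  · rw [integral_ofReal_smul_dirac_add hR.1 (sub_nonneg.2 hR.2)]
    norm_num [chernoffPoisson_self]
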